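/- Let λ_1, …, λ_m be nonzero, real, and pairwise distinct numbers, and let λ_{m+1}, λ_{m+2} be real numbers satisfying 0 < |λ_{m+1}| < min{|λ_1|, …, |λ_m|} and max{|λ_1|, …, |λ_m|} < −λ_{m+2}. Then there exists a real number K ≠ 0 (which may be chosen with |K| arbitrarily small) such that the degree-(2m+3) polynomial p(s) = s(s + λ_1)²(s + λ_2)² ⋯ (s + λ_m)²(s + λ_{m+1})(s + λ_{m+2}) + K has 2m+3 pairwise distinct, nonzero, real roots. -/
import Mathlib


open Matrix MeasureTheory Polynomial

/-- The product `(I + u(l-1)B) ⋯ (I + u(1)B)(I + u(0)B)`. -/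
noncomputable def prodCtrl {n : ℕ} (B : Matrix (Fin n) (Fin n) ℝ) (l : ℕ) (u : ℕ → ℝ) :
    Matrix (Fin n) (Fin n) ℝ :=
  ((List.range l).reverse.map fun k => (1 : Matrix (Fin n) (Fin n) ℝ) + u k • B).prod

/-- `ξ` can be steered to `η` in the system `x(k+1) = (I + u(k)B) x(k)`. -/
noncomputable def steers {n : ℕ} (B : Matrix (Fin n) (Fin n) ℝ) (ξ η : Fin n → ℝ) : Prop :=
  ∃ l : ℕ, 1 ≤ l ∧ ∃ u : ℕ → ℝ, (prodCtrl B l u).mulVec ξ = η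

/-- Near-controllability: outside two Lebesgue-null sets, any state can be steered to any state. -/
noncomputable def nearlyControllable {n : ℕ} (B : Matrix (Fin n) (Fin n) ℝ) : Prop :=
  ∃ E F : Set (Fin n → ℝ), volume E = 0 ∧ volume F = 0 ∧
    ∀ ξ ∉ E, ∀ η ∉ F, steers B ξ η

/-- The matrix `[ξ, Bξ, B²ξ, …, B^{n-1}ξ]`. -/
noncomputable def ctrlMat {n : ℕ} (B : Matrix (Fin n) (Fin n) ℝ) (ξ : Fin n → ℝ) :
    Matrix (Fin n) (Fin n) ℝ :=
  Matrix.of fun i j => (B ^ (j : ℕ)).mulVec ξ i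

/-- The `N × N` Jordan block with eigenvalue `lam`. -/
def jordanBlock (N : ℕ) (lam : ℝ) : Matrix (Fin N) (Fin N) ℝ :=
  Matrix.of fun i j => if i = j then lam else if (j : ℕ) = (i : ℕ) + 1 then 1 else 0

/-- Block-diagonal Jordan matrix: `r` two-dimensional Jordan blocks with eigenvalues
`lam 0, …, lam (r-1)` followed by `1 × 1` blocks `lam r, …, lam (m-1)` (so `n = m + r`). -/
def pairJordan (n r : ℕ) (lam : ℕ → ℝ) : Matrix (Fin n) (Fin n) ℝ :=
  Matrix.of fun i j =>
    if (i : ℕ) = (j : ℕ) then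
      (if (i : ℕ) < 2 * r then lam ((i : ℕ) / 2) else lam ((i : ℕ) - r))
    else if (j : ℕ) = (i : ℕ) + 1 ∧ (i : ℕ) < 2 * r ∧ (i : ℕ) % 2 = 0 then 1 else 0


open Set


lemma aux_same_sign {g : ℝ → ℝ} (hg : Continuous g) {a b : ℝ} (hab : a ≤ b)
    (h : ∀ x ∈ Icc a b, g x ≠ 0) : 0 < g a * g b := by
  rcases lt_trichotomy (g a) 0 with ha | ha | ha
  · rcases lt_trichotomy (g b) 0 with hb | hb | hb
    · exact mul_pos_of_neg_of_neg ha hb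
    · exact absurd hb (h b (right_mem_Icc.2 hab))
    · obtain ⟨x, hx, hx0⟩ := intermediate_value_Icc hab hg.continuousOn
        (⟨ha.le, hb.le⟩ : (0:ℝ) ∈ Icc (g a) (g b))
      exact absurd hx0 (h x hx)
  · exact absurd ha (h a (left_mem_Icc.2 hab))
  · rcases lt_trichotomy (g b) 0 with hb | hb | hb
    · obtain ⟨x, hx, hx0⟩ := intermediate_value_Icc' hab hg.continuousOn ⟨hb.le, ha.le⟩
      exact absurd hx0 (h x hx)
    · exact absurd hb (h b (right_mem_Icc.2 hab))
    · exact mul_pos ha hb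

lemma aux_root {g : ℝ → ℝ} (hg : Continuous g) {a b : ℝ} (hab : a < b)
    (h : g a * g b < 0) : ∃ x ∈ Set.Ioo a b, g x = 0 := by
  rcases mul_neg_iff.1 h with ⟨ha, hb⟩ | ⟨ha, hb⟩
  · obtain ⟨x, hx, hx0⟩ := intermediate_value_Ioo' hab.le hg.continuousOn
      (⟨hb, ha⟩ : (0:ℝ) ∈ Set.Ioo (g b) (g a))
    exact ⟨x, hx, hx0⟩
  · obtain ⟨x, hx, hx0⟩ := intermediate_value_Ioo hab.le hg.continuousOn ⟨ha, hb⟩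
    exact ⟨x, hx, hx0⟩

lemma aux_cross {f g : ℝ → ℝ} (hg : Continuous g) {c δ : ℝ} (hδ : 0 < δ)
    (hfg : ∀ x, f x = (x - c) * g x)
    (h : ∀ x ∈ Set.Icc (c - δ) (c + δ), g x ≠ 0) :
    f (c - δ) * f (c + δ) < 0 := by
  have hs := aux_same_sign hg (by linarith) h
  have e1 : f (c-δ) = (-δ) * g (c-δ) := by rw [hfg]; ring_nf
  have e2 : f (c+δ) = δ * g (c+δ) := by rw [hfg]; ring_nf
  rw [e1, e2]
  nlinarith [hs, sq_nonneg δ, mul_pos hδ hδ]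

noncomputable def myP (m : ℕ) (lam : ℕ → ℝ) : ℝ → ℝ :=
  fun s => ∏ i ∈ Finset.range m, (s + lam i)^2

noncomputable def myF (m : ℕ) (lam : ℕ → ℝ) (μ ν : ℝ) : ℝ → ℝ :=
  fun s => s * myP m lam s * (s + μ) * (s + ν)

lemma myP_cont (m : ℕ) (lam : ℕ → ℝ) : Continuous (myP m lam) := by
  unfold myP
  exact continuous_finset_prod _ (fun i _ => by continuity)

lemma myF_cont (m : ℕ) (lam : ℕ → ℝ) (μ ν : ℝ) : Continuous (myF m lam μ ν) := by
  unfold myF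
  have := myP_cont m lam
  continuity

lemma myP_pos (m : ℕ) (lam : ℕ → ℝ) (x : ℝ) (h : ∀ i < m, x ≠ -lam i) :
    0 < myP m lam x := by
  unfold myP
  apply Finset.prod_pos
  intro i hi
  have h2 : x + lam i ≠ 0 := by
    intro h0
    exact h i (Finset.mem_range.1 hi) (by linarith)
  positivity

lemma myP_ne (m : ℕ) (lam : ℕ → ℝ) (x : ℝ) (h : myP m lam x = 0) :
    ∃ i < m, x = -lam i := by
  by_contra hc
  push_neg at hc
  exact absurd h (ne_of_gt (myP_pos m lam x hc))

theorem stmt16aux {m : ℕ} (hm : 1 ≤ m) (lam : ℕ → ℝ) (μ ν : ℝ)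
    (hnz : ∀ i < m, lam i ≠ 0)
    (hdist : ∀ i < m, ∀ j < m, i ≠ j → lam i ≠ lam j)
    (hμ0 : 0 < |μ|) (hμ : ∀ i < m, |μ| < |lam i|)
    (hν : ∀ i < m, |lam i| < -ν) :
    ∀ ε : ℝ, 0 < ε → ∃ K : ℝ, K ≠ 0 ∧ |K| < ε ∧
      ∃ ρ : Fin (2 * m + 3) → ℝ, Function.Injective ρ ∧ (∀ t, ρ t ≠ 0) ∧
        ∀ t, myF m lam μ ν (ρ t) + K = 0 := by
  intro ε hε
  set f := myF m lam μ ν with hfdef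
  set P := myP m lam with hPdef
  have hfP : ∀ s, f s = s * P s * (s + μ) * (s + ν) := fun s => rfl
  have hfc : Continuous f := myF_cont m lam μ ν
  have hν0 : ν < 0 := by
    have h1 := hν 0 hm
    have h2 : 0 < |lam 0| := abs_pos.2 (hnz 0 hm)
    linarith
  -- the root set
  set Z : Finset ℝ :=
    insert 0 (insert (-μ) (insert (-ν) ((Finset.range m).image fun i => -lam i))) with hZdef
  have h0Z : (0:ℝ) ∈ Z := by simp [hZdef]
  have hμZ : -μ ∈ Z := by simp [hZdef]
  have hνZ : -ν ∈ Z := by simp [hZdef]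
  have htZ : ∀ i < m, -lam i ∈ Z := by
    intro i hi
    simp only [hZdef, Finset.mem_insert, Finset.mem_image]
    right; right; right
    exact ⟨i, Finset.mem_range.2 hi, rfl⟩
  have hZmem : ∀ x : ℝ, x ∈ Z → x = 0 ∨ x = -μ ∨ x = -ν ∨ ∃ i < m, x = -lam i := by
    intro x hx
    simp only [hZdef, Finset.mem_insert, Finset.mem_image, Finset.mem_range] at hx
    rcases hx with h | h | h | ⟨i, hi, h⟩
    · exact Or.inl h
    · exact Or.inr (Or.inl h)
    · exact Or.inr (Or.inr (Or.inl h))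
    · exact Or.inr (Or.inr (Or.inr ⟨i, hi, h.symm⟩))
  -- distinctness of the roots
  have d0μ : (0:ℝ) ≠ -μ := by
    intro h
    have : μ = 0 := by linarith
    rw [this] at hμ0
    simp at hμ0
  have d0ν : (0:ℝ) ≠ -ν := by intro h; linarith [h ▸ hν0]
  have dμν : -μ ≠ -ν := by
    have h1 : -μ ≤ |μ| := neg_le_abs μ
    have h2 := hμ 0 hm
    have h3 := hν 0 hm
    intro h
    have : μ = ν := by linarith [neg_injective h]
    linarith [this ▸ h1]
  have dt0 : ∀ i < m, -lam i ≠ 0 := fun i hi => neg_ne_zero.2 (hnz i hi)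
  have dtμ : ∀ i < m, -lam i ≠ -μ := by
    intro i hi h
    have heq : lam i = μ := neg_injective h
    have := hμ i hi
    rw [heq] at this
    exact absurd this (lt_irrefl _)
  have dtν : ∀ i < m, -lam i ≠ -ν := by
    intro i hi
    have h1 : -lam i ≤ |lam i| := neg_le_abs _
    have h2 := hν i hi
    exact ne_of_lt (by linarith)
  have dtt : ∀ i < m, ∀ j < m, i ≠ j → -lam i ≠ -lam j := by
    intro i hi j hj hij h
    exact hdist i hi j hj hij (neg_injective h)
  -- f vanishes exactly on Z
  have hzero : ∀ z ∈ Z, f z = 0 := by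
    intro z hz
    rcases hZmem z hz with rfl | rfl | rfl | ⟨i, hi, rfl⟩
    · rw [hfP]; ring
    · rw [hfP]; ring
    · rw [hfP]; ring
    · rw [hfP]
      have hp : P (-lam i) = 0 := by
        rw [hPdef]
        unfold myP
        apply Finset.prod_eq_zero (Finset.mem_range.2 hi)
        simp
      rw [hp]; ring
  have hroot : ∀ x : ℝ, f x = 0 → x ∈ Z := by
    intro x hx
    rw [hfP] at hx
    rcases mul_eq_zero.1 hx with h | h
    · rcases mul_eq_zero.1 h with h | h
      · rcases mul_eq_zero.1 h with h | h
        · rw [h]; exact h0Z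
        · obtain ⟨i, hi, hxi⟩ := myP_ne m lam x (hPdef ▸ h)
          rw [hxi]; exact htZ i hi
      · have : x = -μ := by linarith
        rw [this]; exact hμZ
    · have : x = -ν := by linarith
      rw [this]; exact hνZ
  -- minimal gap between roots
  set D : Finset ℝ := ((Z ×ˢ Z).filter fun p => p.1 ≠ p.2).image fun p => |p.1 - p.2| with hDdef
  have hDmem : ∀ z ∈ Z, ∀ z' ∈ Z, z ≠ z' → |z - z'| ∈ D := by
    intro z hz z' hz' hzz'
    rw [hDdef]
    exact Finset.mem_image.2 ⟨(z, z'), Finset.mem_filter.2 ⟨Finset.mem_product.2 ⟨hz, hz'⟩, hzz'⟩, rfl⟩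
  have hDne : D.Nonempty := ⟨_, hDmem 0 h0Z (-ν) hνZ d0ν⟩
  obtain ⟨g0, hg0D, hg0min⟩ := D.exists_min_image (fun x => x) hDne
  have hg0pos : 0 < g0 := by
    rw [hDdef] at hg0D
    obtain ⟨p, hp, hpe⟩ := Finset.mem_image.1 hg0D
    have hne := (Finset.mem_filter.1 hp).2
    rw [← hpe]
    exact abs_pos.2 (sub_ne_zero.2 hne)
  set δ : ℝ := g0 / 3 with hδdef
  have hδ : 0 < δ := by rw [hδdef]; linarith
  have hgap2 : ∀ z ∈ Z, ∀ z' ∈ Z, z ≠ z' → 2 * δ < |z - z'| := by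
    intro z hz z' hz' hzz'
    have h1 : g0 ≤ |z - z'| := hg0min _ (hDmem z hz z' hz' hzz')
    rw [hδdef]; linarith
  have hsep : ∀ z ∈ Z, ∀ z' ∈ Z, z ≠ z' → ∀ x y : ℝ, |x - z| ≤ δ → |y - z'| ≤ δ → x ≠ y := by
    intro z hz z' hz' hzz' x y hx hy hxy
    rw [hxy] at hx
    have h1 := hgap2 z hz z' hz' hzz'
    have h2 : |z - z'| ≤ |z - y| + |y - z'| := abs_sub_le z y z'
    rw [abs_sub_comm z y] at h2
    linarith
  have hfar : ∀ z ∈ Z, ∀ z' ∈ Z, z ≠ z' → ∀ x : ℝ, |x - z| ≤ δ → x ≠ z' := by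
    intro z hz z' hz' hzz' x hx
    exact hsep z hz z' hz' hzz' x z' hx (by simp [hδ.le])
  -- shifted points are not roots
  have hshift : ∀ z ∈ Z, f (z + δ) ≠ 0 ∧ f (z - δ) ≠ 0 := by
    intro z hz
    constructor
    · intro h0
      have hx := hroot _ h0
      have hne : z ≠ z + δ := by intro h; nlinarith [congrArg (fun t => t - z) h]
      have := hgap2 z hz (z + δ) hx hne
      rw [show z - (z + δ) = -δ by ring, abs_neg, abs_of_pos hδ] at this
      linarith
    · intro h0
      have hx := hroot _ h0
      have hne : z ≠ z - δ := by intro h; nlinarith [congrArg (fun t => t - z) h]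
      have := hgap2 z hz (z - δ) hx hne
      rw [show z - (z - δ) = δ by ring, abs_of_pos hδ] at this
      linarith
  -- the lower bound m0 on |f| at shifted points
  set V : Finset ℝ := Z.image (fun z => z + δ) ∪ Z.image (fun z => z - δ) with hVdef
  have hVne : V.Nonempty := by
    refine ⟨0 + δ, ?_⟩
    rw [hVdef]
    exact Finset.mem_union_left _ (Finset.mem_image.2 ⟨0, h0Z, rfl⟩)
  obtain ⟨v0, hv0V, hv0min⟩ := V.exists_min_image (fun x => |f x|) hVne
  set m0 : ℝ := |f v0| with hm0def
  have hm0pos : 0 < m0 := by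
    rw [hm0def]
    apply abs_pos.2
    rw [hVdef] at hv0V
    rcases Finset.mem_union.1 hv0V with h | h
    · obtain ⟨z, hz, rfl⟩ := Finset.mem_image.1 h
      exact (hshift z hz).1
    · obtain ⟨z, hz, rfl⟩ := Finset.mem_image.1 h
      exact (hshift z hz).2
  have hm0le : ∀ z ∈ Z, m0 ≤ |f (z + δ)| ∧ m0 ≤ |f (z - δ)| := by
    intro z hz
    constructor
    · apply hv0min
      rw [hVdef]
      exact Finset.mem_union_left _ (Finset.mem_image.2 ⟨z, hz, rfl⟩)
    · apply hv0min
      rw [hVdef]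
      exact Finset.mem_union_right _ (Finset.mem_image.2 ⟨z, hz, rfl⟩)
  -- choose K
  set K : ℝ := min ε m0 / 2 with hKdef
  have hminpos : 0 < min ε m0 := lt_min hε hm0pos
  have hK0 : 0 < K := by rw [hKdef]; linarith
  have hKε : K < ε := by
    have := min_le_left ε m0
    rw [hKdef]; linarith
  have hKm0 : K < m0 := by
    have := min_le_right ε m0
    rw [hKdef]; linarith
  -- sign of f near the double roots
  have htouch : ∀ i < m, ∀ x : ℝ, |x - (-lam i)| ≤ δ → x ≠ -lam i → f x < 0 := by
    intro i hi x hx hxt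
    have htz := htZ i hi
    have hxb := abs_le.1 hx
    -- x + ν < 0
    have hxν : x + ν < 0 := by
      have h1 := hgap2 (-lam i) htz (-ν) hνZ (dtν i hi)
      have h2 : -lam i < -ν := lt_of_le_of_lt (neg_le_abs _) (hν i hi)
      rw [show -lam i - -ν = -(-ν - -lam i) by ring, abs_neg, abs_of_pos (by linarith)] at h1
      linarith [hxb.2]
    -- P x > 0
    have hP : 0 < P x := by
      rw [hPdef]
      apply myP_pos
      intro j hj
      by_cases hji : j = i
      · rw [hji]; exact hxt
      · exact hfar (-lam i) htz (-lam j) (htZ j hj) (dtt i hi j hj (fun h => hji h.symm)) x hx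
    rcases lt_trichotomy (lam i) 0 with hl | hl | hl
    · -- -lam i > 0 : x > 0 and x + μ > 0
      have ht0 : (0:ℝ) < -lam i := by linarith
      have h1 := hgap2 (-lam i) htz 0 h0Z (dt0 i hi)
      rw [sub_zero, abs_of_pos ht0] at h1
      have hx0 : 0 < x := by linarith [hxb.1]
      have h3 : -μ < -lam i := by
        have ha : -μ ≤ |μ| := neg_le_abs μ
        have hb := hμ i hi
        rw [abs_of_neg hl] at hb
        linarith
      have h2 := hgap2 (-lam i) htz (-μ) hμZ (dtμ i hi)
      rw [abs_of_pos (by linarith)] at h2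
      have hxμ : 0 < x + μ := by linarith [hxb.1]
      rw [hfP]
      exact mul_neg_of_pos_of_neg (mul_pos (mul_pos hx0 hP) hxμ) hxν
    · exact absurd hl (hnz i hi)
    · -- -lam i < 0 : x < 0 and x + μ < 0
      have ht0 : -lam i < 0 := by linarith
      have h1 := hgap2 (-lam i) htz 0 h0Z (dt0 i hi)
      rw [sub_zero, abs_of_neg ht0, neg_neg] at h1
      have hx0 : x < 0 := by linarith [hxb.2]
      have h3 : -lam i < -μ := by
        have ha : μ ≤ |μ| := le_abs_self μ
        have hb := hμ i hi
        rw [abs_of_pos hl] at hb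
        linarith
      have h2 := hgap2 (-lam i) htz (-μ) hμZ (dtμ i hi)
      rw [show -lam i - -μ = -(-μ - -lam i) by ring, abs_neg, abs_of_pos (by linarith)] at h2
      have hxμ : x + μ < 0 := by linarith [hxb.2]
      rw [hfP]
      have e : x * P x * (x + μ) * (x + ν) = (x * (x + μ) * P x) * (x + ν) := by ring
      rw [e]
      exact mul_neg_of_pos_of_neg (mul_pos (mul_pos_of_neg_of_neg hx0 hxμ) hP) hxν
  -- Icc points are δ-close
  have hIcc : ∀ c x : ℝ, x ∈ Icc (c - δ) (c + δ) → |x - c| ≤ δ := by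
    intro c x hx
    exact abs_le.2 ⟨by linarith [hx.1], by linarith [hx.2]⟩
  -- sign crossings at the three simple roots
  have hPc : Continuous P := hPdef ▸ myP_cont m lam
  have hlin : ∀ a : ℝ, Continuous fun x : ℝ => x + a :=
    fun a => continuous_id.add continuous_const
  have hcross0 : f (0 - δ) * f (0 + δ) < 0 := by
    apply aux_cross (g := fun x => P x * (x + μ) * (x + ν))
      ((hPc.mul (hlin μ)).mul (hlin ν)) hδ
    · intro x; rw [hfP]; ring
    · intro x hx h0
      have hxc : |x - 0| ≤ δ := hIcc 0 x hx
      rcases mul_eq_zero.1 h0 with h | h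
      · rcases mul_eq_zero.1 h with h | h
        · obtain ⟨j, hj, hxj⟩ := myP_ne m lam x (hPdef ▸ h)
          exact hfar 0 h0Z (-lam j) (htZ j hj) (dt0 j hj).symm x hxc hxj
        · exact hfar 0 h0Z (-μ) hμZ d0μ x hxc (by linarith)
      · exact hfar 0 h0Z (-ν) hνZ d0ν x hxc (by linarith)
  have hcrossμ : f (-μ - δ) * f (-μ + δ) < 0 := by
    apply aux_cross (g := fun x => x * P x * (x + ν))
      (((continuous_id.mul hPc).mul (hlin ν))) hδ
    · intro x; rw [hfP]; ring
    · intro x hx h0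
      have hxc : |x - -μ| ≤ δ := hIcc (-μ) x hx
      rcases mul_eq_zero.1 h0 with h | h
      · rcases mul_eq_zero.1 h with h | h
        · exact hfar (-μ) hμZ 0 h0Z d0μ.symm x hxc h
        · obtain ⟨j, hj, hxj⟩ := myP_ne m lam x (hPdef ▸ h)
          exact hfar (-μ) hμZ (-lam j) (htZ j hj) (dtμ j hj).symm x hxc hxj
      · exact hfar (-μ) hμZ (-ν) hνZ dμν x hxc (by linarith)
  have hcrossν : f (-ν - δ) * f (-ν + δ) < 0 := by
    apply aux_cross (g := fun x => x * P x * (x + μ))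
      (((continuous_id.mul hPc).mul (hlin μ))) hδ
    · intro x; rw [hfP]; ring
    · intro x hx h0
      have hxc : |x - -ν| ≤ δ := hIcc (-ν) x hx
      rcases mul_eq_zero.1 h0 with h | h
      · rcases mul_eq_zero.1 h with h | h
        · exact hfar (-ν) hνZ 0 h0Z d0ν.symm x hxc h
        · obtain ⟨j, hj, hxj⟩ := myP_ne m lam x (hPdef ▸ h)
          exact hfar (-ν) hνZ (-lam j) (htZ j hj) (dtν j hj).symm x hxc hxj
      · exact hfar (-ν) hνZ (-μ) hμZ dμν.symm x hxc (by linarith)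
  -- root extraction
  have hfKc : Continuous fun x : ℝ => f x + K := hfc.add continuous_const
  have hsimple : ∀ c ∈ Z, f (c - δ) * f (c + δ) < 0 →
      ∃ x, x ∈ Ioo (c - δ) (c + δ) ∧ f x + K = 0 := by
    intro c hc hcr
    have h1 : m0 ≤ |f (c - δ)| := (hm0le c hc).2
    have h2 : m0 ≤ |f (c + δ)| := (hm0le c hc).1
    have hpr : (f (c - δ) + K) * (f (c + δ) + K) < 0 := by
      rcases mul_neg_iff.1 hcr with ⟨ha, hb⟩ | ⟨ha, hb⟩
      · have hb' : f (c + δ) + K < 0 := by rw [abs_of_neg hb] at h2; linarith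
        exact mul_neg_of_pos_of_neg (by linarith) hb'
      · have ha' : f (c - δ) + K < 0 := by rw [abs_of_neg ha] at h1; linarith
        exact mul_neg_of_neg_of_pos ha' (by linarith)
    obtain ⟨x, hx, hx0⟩ := aux_root hfKc (by linarith) hpr
    exact ⟨x, hx, hx0⟩
  obtain ⟨s0, hs0I, hs0K⟩ := hsimple 0 h0Z hcross0
  obtain ⟨s1, hs1I, hs1K⟩ := hsimple (-μ) hμZ hcrossμ
  obtain ⟨s2, hs2I, hs2K⟩ := hsimple (-ν) hνZ hcrossν
  -- two roots near each double root
  have htouchroot : ∀ i : ℕ, ∃ x y : ℝ, i < m →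
      x ∈ Ioo (-lam i - δ) (-lam i) ∧ y ∈ Ioo (-lam i) (-lam i + δ) ∧
      f x + K = 0 ∧ f y + K = 0 := by
    intro i
    by_cases hi : i < m
    · have htz := htZ i hi
      have ha : f (-lam i - δ) + K < 0 := by
        have h1 : f (-lam i - δ) < 0 := by
          apply htouch i hi
          · rw [show -lam i - δ - -lam i = -δ by ring, abs_neg, abs_of_pos hδ]
          · intro h
            have : δ = 0 := by linarith [congrArg (fun t => -lam i - t) h]
            linarith
        have h2 := (hm0le (-lam i) htz).2
        rw [abs_of_neg h1] at h2
        linarith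
      have hb : f (-lam i + δ) + K < 0 := by
        have h1 : f (-lam i + δ) < 0 := by
          apply htouch i hi
          · rw [show -lam i + δ - -lam i = δ by ring, abs_of_pos hδ]
          · intro h
            have : δ = 0 := by linarith [congrArg (fun t => t - -lam i) h]
            linarith
        have h2 := (hm0le (-lam i) htz).1
        rw [abs_of_neg h1] at h2
        linarith
      have ht : 0 < f (-lam i) + K := by
        have h0 : f (-lam i) = 0 := hzero _ htz
        linarith
      obtain ⟨x, hx, hx0⟩ := aux_root hfKc (show -lam i - δ < -lam i by linarith)
        (mul_neg_of_neg_of_pos ha ht)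
      obtain ⟨y, hy, hy0⟩ := aux_root hfKc (show -lam i < -lam i + δ by linarith)
        (mul_neg_of_pos_of_neg ht hb)
      exact ⟨x, y, fun _ => ⟨hx, hy, hx0, hy0⟩⟩
    · exact ⟨0, 0, fun h => absurd h hi⟩
  choose R1 R2 hR using htouchroot
  -- assemble
  refine ⟨K, ne_of_gt hK0, by rw [abs_of_pos hK0]; exact hKε, ?_⟩
  set ρ : Fin (2 * m + 3) → ℝ := fun j =>
    if (j : ℕ) < m then R1 (j : ℕ)
    else if (j : ℕ) < 2 * m then R2 ((j : ℕ) - m)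
    else if (j : ℕ) = 2 * m then s0
    else if (j : ℕ) = 2 * m + 1 then s1
    else s2 with hρdef
  have hρval1 : ∀ j : Fin (2 * m + 3), (j : ℕ) < m → ρ j = R1 (j : ℕ) := by
    intro j h; simp only [hρdef]; rw [if_pos h]
  have hρval2 : ∀ j : Fin (2 * m + 3), m ≤ (j : ℕ) → (j : ℕ) < 2 * m →
      ρ j = R2 ((j : ℕ) - m) := by
    intro j h h'; simp only [hρdef]; rw [if_neg (by omega), if_pos h']
  have hρval3 : ∀ j : Fin (2 * m + 3), (j : ℕ) = 2 * m → ρ j = s0 := by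
    intro j h; simp only [hρdef]; rw [if_neg (by omega), if_neg (by omega), if_pos h]
  have hρval4 : ∀ j : Fin (2 * m + 3), (j : ℕ) = 2 * m + 1 → ρ j = s1 := by
    intro j h
    simp only [hρdef]
    rw [if_neg (by omega), if_neg (by omega), if_neg (by omega), if_pos h]
  have hρval5 : ∀ j : Fin (2 * m + 3), (j : ℕ) = 2 * m + 2 → ρ j = s2 := by
    intro j h
    simp only [hρdef]
    rw [if_neg (by omega), if_neg (by omega), if_neg (by omega), if_neg (by omega)]
  have hkey : ∀ j : Fin (2 * m + 3), ∃ z, z ∈ Z ∧ |ρ j - z| ≤ δ ∧ f (ρ j) + K = 0 ∧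
      (((j : ℕ) < m ∧ z = -lam (j : ℕ) ∧ ρ j < z) ∨
       (m ≤ (j : ℕ) ∧ (j : ℕ) < 2 * m ∧ z = -lam ((j : ℕ) - m) ∧ z < ρ j) ∨
       ((j : ℕ) = 2 * m ∧ z = 0) ∨
       ((j : ℕ) = 2 * m + 1 ∧ z = -μ) ∨
       ((j : ℕ) = 2 * m + 2 ∧ z = -ν)) := by
    intro j
    have hjlt := j.isLt
    rcases (by omega : (j : ℕ) < m ∨ (m ≤ (j : ℕ) ∧ (j : ℕ) < 2 * m) ∨ (j : ℕ) = 2 * m ∨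
        (j : ℕ) = 2 * m + 1 ∨ (j : ℕ) = 2 * m + 2) with h | ⟨h, h'⟩ | h | h | h
    · obtain ⟨hI, _, hroot1, _⟩ := hR (j : ℕ) h
      refine ⟨-lam (j : ℕ), htZ _ h, ?_, ?_, Or.inl ⟨h, rfl, ?_⟩⟩
      · rw [hρval1 j h]
        exact abs_le.2 ⟨by linarith [hI.1], by linarith [hI.2]⟩
      · rw [hρval1 j h]; exact hroot1
      · rw [hρval1 j h]; exact hI.2
    · have hlt : (j : ℕ) - m < m := by omega
      obtain ⟨_, hI, _, hroot2⟩ := hR ((j : ℕ) - m) hlt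
      refine ⟨-lam ((j : ℕ) - m), htZ _ hlt, ?_, ?_, Or.inr (Or.inl ⟨h, h', rfl, ?_⟩)⟩
      · rw [hρval2 j h h']
        exact abs_le.2 ⟨by linarith [hI.1], by linarith [hI.2]⟩
      · rw [hρval2 j h h']; exact hroot2
      · rw [hρval2 j h h']; exact hI.1
    · refine ⟨0, h0Z, ?_, ?_, Or.inr (Or.inr (Or.inl ⟨h, rfl⟩))⟩
      · rw [hρval3 j h]
        exact abs_le.2 ⟨by linarith [hs0I.1], by linarith [hs0I.2]⟩
      · rw [hρval3 j h]; exact hs0K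
    · refine ⟨-μ, hμZ, ?_, ?_, Or.inr (Or.inr (Or.inr (Or.inl ⟨h, rfl⟩)))⟩
      · rw [hρval4 j h]
        exact abs_le.2 ⟨by linarith [hs1I.1], by linarith [hs1I.2]⟩
      · rw [hρval4 j h]; exact hs1K
    · refine ⟨-ν, hνZ, ?_, ?_, Or.inr (Or.inr (Or.inr (Or.inr ⟨h, rfl⟩)))⟩
      · rw [hρval5 j h]
        exact abs_le.2 ⟨by linarith [hs2I.1], by linarith [hs2I.2]⟩
      · rw [hρval5 j h]; exact hs2K
  refine ⟨ρ, ?_, ?_, ?_⟩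
  · -- injectivity
    intro j1 j2 heq
    obtain ⟨z1, hz1, hc1, _, hd1⟩ := hkey j1
    obtain ⟨z2, hz2, hc2, _, hd2⟩ := hkey j2
    have hzz : z1 = z2 := by
      by_contra hne
      exact hsep z1 hz1 z2 hz2 hne (ρ j1) (ρ j2) hc1 hc2 heq
    apply Fin.ext
    rcases hd1 with ⟨h1a, h1b, h1c⟩ | ⟨h1a, h1b, h1c, h1d⟩ | ⟨h1a, h1b⟩ | ⟨h1a, h1b⟩ | ⟨h1a, h1b⟩ <;>
      rcases hd2 with ⟨h2a, h2b, h2c⟩ | ⟨h2a, h2b, h2c, h2d⟩ | ⟨h2a, h2b⟩ | ⟨h2a, h2b⟩ | ⟨h2a, h2b⟩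
    -- (1,1)
    · by_contra hne
      exact dtt _ h1a _ h2a hne (by rw [← h1b, ← h2b]; exact hzz)
    -- (1,2)
    · exfalso; linarith
    -- (1,3)
    · exact absurd (by rw [← h1b, ← h2b]; exact hzz) (dt0 _ h1a)
    -- (1,4)
    · exact absurd (by rw [← h1b, ← h2b]; exact hzz) (dtμ _ h1a)
    -- (1,5)
    · exact absurd (by rw [← h1b, ← h2b]; exact hzz) (dtν _ h1a)
    -- (2,1)
    · exfalso; linarith
    -- (2,2)
    · by_contra hne
      exact dtt ((j1 : ℕ) - m) (by omega) ((j2 : ℕ) - m) (by omega) (by omega)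
        (by rw [← h1c, ← h2c]; exact hzz)
    -- (2,3)
    · exact absurd (by rw [← h1c, ← h2b]; exact hzz) (dt0 ((j1 : ℕ) - m) (by omega))
    -- (2,4)
    · exact absurd (by rw [← h1c, ← h2b]; exact hzz) (dtμ ((j1 : ℕ) - m) (by omega))
    -- (2,5)
    · exact absurd (by rw [← h1c, ← h2b]; exact hzz) (dtν ((j1 : ℕ) - m) (by omega))
    -- (3,1)
    · exact absurd (by rw [← h2b, ← h1b]; exact hzz.symm) (dt0 _ h2a)
    -- (3,2)
    · exact absurd (by rw [← h2c, ← h1b]; exact hzz.symm) (dt0 ((j2 : ℕ) - m) (by omega))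
    -- (3,3)
    · omega
    -- (3,4)
    · exact absurd (by rw [← h1b, ← h2b]; exact hzz) d0μ
    -- (3,5)
    · exact absurd (by rw [← h1b, ← h2b]; exact hzz) d0ν
    -- (4,1)
    · exact absurd (by rw [← h2b, ← h1b]; exact hzz.symm) (dtμ _ h2a)
    -- (4,2)
    · exact absurd (by rw [← h2c, ← h1b]; exact hzz.symm) (dtμ ((j2 : ℕ) - m) (by omega))
    -- (4,3)
    · exact absurd (by rw [← h2b, ← h1b]; exact hzz.symm) d0μ
    -- (4,4)
    · omega
    -- (4,5)
    · exact absurd (by rw [← h1b, ← h2b]; exact hzz) dμν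
    -- (5,1)
    · exact absurd (by rw [← h2b, ← h1b]; exact hzz.symm) (dtν _ h2a)
    -- (5,2)
    · exact absurd (by rw [← h2c, ← h1b]; exact hzz.symm) (dtν ((j2 : ℕ) - m) (by omega))
    -- (5,3)
    · exact absurd (by rw [← h2b, ← h1b]; exact hzz.symm) d0ν
    -- (5,4)
    · exact absurd (by rw [← h2b, ← h1b]; exact hzz.symm) dμν
    -- (5,5)
    · omega
  · -- nonzero
    intro j h0
    obtain ⟨z, _, _, hrootj, _⟩ := hkey j
    rw [h0] at hrootj
    have hf0 : f 0 = 0 := hzero 0 h0Z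
    rw [hf0] at hrootj
    linarith
  · -- roots
    intro j
    obtain ⟨z, _, _, hrootj, _⟩ := hkey j
    exact hrootj

/-- with `λ_1, …, λ_m` nonzero, real, pairwise distinct, `μ = λ_{m+1}` with
`0 < |μ| < min |λ_i|` and `ν = λ_{m+2}` with `max |λ_i| < -ν`, for every `ε > 0` there is a
nonzero `K` with `|K| < ε` such that
`p(s) = s (s+λ_1)² ⋯ (s+λ_m)² (s+μ)(s+ν) + K` has `2m+3` pairwise distinct nonzero real
roots. -/
theorem stmt16 {m : ℕ} (hm : 1 ≤ m) (lam : ℕ → ℝ) (μ ν : ℝ)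
    (hnz : ∀ i < m, lam i ≠ 0)
    (hdist : ∀ i < m, ∀ j < m, i ≠ j → lam i ≠ lam j)
    (hμ0 : 0 < |μ|) (hμ : ∀ i < m, |μ| < |lam i|)
    (hν : ∀ i < m, |lam i| < -ν) :
    ∀ ε : ℝ, 0 < ε → ∃ K : ℝ, K ≠ 0 ∧ |K| < ε ∧
      ∃ ρ : Fin (2 * m + 3) → ℝ, Function.Injective ρ ∧ (∀ t, ρ t ≠ 0) ∧
        ∀ t, ρ t * (∏ i ∈ Finset.range m, (ρ t + lam i) ^ 2) * (ρ t + μ) * (ρ t + ν)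
          + K = 0 := by
  intro ε hε
  obtain ⟨K, h1, h2, ρ, h3, h4, h5⟩ :=
    stmt16aux hm lam μ ν hnz hdist hμ0 hμ hν ε hε
  refine ⟨K, h1, h2, ρ, h3, h4, fun t => ?_⟩
  have := h5 t
  simpa [myF, myP] using this
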